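/- Let cl be a maximal exceptional sequence in Z^r, fix ν, and let B be a segment (maximal run of consecutive integers with nonempty layers). Then the alternating sum Σ_{c∈B} (−1)^c ℓ_c equals 0, where ℓ_c = |L_c|. -/

import Mathlib

def IsExceptional {r m : ℕ} (cl : Fin m → (Fin r → ℤ)) : Prop :=
  ∀ i j : Fin m, i < j → ∃ ν : Fin r, cl j ν - cl i ν = 1

def layerCard {r m : ℕ} (cl : Fin m → (Fin r → ℤ)) (ν : Fin r) (c : ℤ) : ℕ :=
  (Finset.univ.filter fun i => cl i ν = c).card

/-!
Split the points of `cl` into two classes by a predicate `p` such that no two points of the same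
class differ by exactly `1` in coordinate `ν`. Inside a class every step of the exceptional
sequence then happens in one of the other `r - 1` coordinates, and such a set has at most
`2 ^ (r - 1)` elements (induction on the coordinates, splitting by the parity of the new one).
As the classes together have `2 ^ r` points, both have exactly `2 ^ (r - 1)`.

Apply this to `p = "ν-coordinate even"` and to the same colouring with the parity flipped outside
the segment; the latter is admissible because the layers bordering the segment are empty. Both
colourings are balanced, and the sum of their signs is twice the alternating sum over the segment.
-/

open Finset

theorem card_le_two_pow_of_forall_lt_exists_sub_eq_one {ι κ : Type*} [LinearOrder ι]
    [DecidableEq κ] (f : ι → κ → ℤ) (t : Finset κ) (s : Finset ι)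
    (hs : ∀ i ∈ s, ∀ j ∈ s, i < j → ∃ μ ∈ t, f j μ - f i μ = 1) : #s ≤ 2 ^ #t := by
  induction t using Finset.induction_on generalizing s with
  | empty =>
    refine card_le_one.mpr fun i hi j hj => ?_
    by_contra hij
    rcases lt_or_gt_of_ne hij with hlt | hlt
    · simpa using hs i hi j hj hlt
    · simpa using hs j hj i hi hlt
  | @insert a t hat ih =>
    -- A unit step in coordinate `a` changes the parity of `f · a`, so inside a parity class
    -- every step happens in `t`.
    have hclass : ∀ s' ⊆ s, (∀ i ∈ s', ∀ j ∈ s', Even (f i a) ↔ Even (f j a)) →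
        #s' ≤ 2 ^ #t := by
      refine fun s' hsub hpar => ih s' fun i hi j hj hij => ?_
      obtain ⟨μ, hμ, hstep⟩ := hs i (hsub hi) j (hsub hj) hij
      rcases mem_insert.mp hμ with rfl | hμt
      · have : Even (f j μ - f i μ) := Int.even_sub.mpr (hpar j hj i hi)
        simp [hstep] at this
      · exact ⟨μ, hμt, hstep⟩
    have heven := hclass _ (filter_subset (fun i => Even (f i a)) s) fun i hi j hj => by
      simp only [mem_filter] at hi hj; tauto
    have hodd := hclass _ (filter_subset (fun i => ¬Even (f i a)) s) fun i hi j hj => by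
      simp only [mem_filter] at hi hj; tauto
    rw [card_insert_of_notMem hat, pow_succ, mul_two,
      ← card_filter_add_card_filter_not (s := s) (fun i => Even (f i a))]
    exact add_le_add heven hodd

theorem IsExceptional.sum_ite_one_neg_one_eq_zero {r : ℕ} {cl : Fin (2 ^ r) → Fin r → ℤ}
    (h : IsExceptional cl) (ν : Fin r) (p : Fin (2 ^ r) → Prop) [DecidablePred p]
    (hp : ∀ i j, cl j ν - cl i ν = 1 → ¬(p i ↔ p j)) :
    ∑ i, (if p i then (1 : ℤ) else -1) = 0 := by
  have hclass : ∀ q : Fin (2 ^ r) → Prop, [DecidablePred q] → (∀ i j, q i → q j → (p i ↔ p j)) →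
      #{i | q i} ≤ 2 ^ (r - 1) := by
    intro q _ hq
    have hcard : #(univ.erase ν) = r - 1 := by simp
    rw [← hcard]
    refine card_le_two_pow_of_forall_lt_exists_sub_eq_one cl _ _ fun i hi j hj hij => ?_
    simp only [mem_filter, mem_univ, true_and] at hi hj
    obtain ⟨μ, hstep⟩ := h i j hij
    refine ⟨μ, mem_erase.mpr ⟨?_, mem_univ μ⟩, hstep⟩
    rintro rfl
    exact hp i j hstep (hq i j hi hj)
  have hpos := hclass p fun i j hi hj => iff_of_true hi hj
  have hneg := hclass (¬p ·) fun i j hi hj => iff_of_false hi hj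
  have htotal : #{i | p i} + #{i | ¬p i} = 2 ^ (r - 1) + 2 ^ (r - 1) := by
    rw [card_filter_add_card_filter_not, card_univ, Fintype.card_fin, ← two_mul, ← pow_succ',
      Nat.sub_add_cancel ν.pos]
  have hbalanced : #{i | p i} = #{i | ¬p i} := by omega
  simp [sum_ite, hbalanced]

theorem mem_Icc_iff_of_sub_eq_one {lo hi x y : ℤ} (hxy : y - x = 1) (hx : x ≠ lo - 1)
    (hy : y ≠ hi + 1) : x ∈ Icc lo hi ↔ y ∈ Icc lo hi := by
  simp only [mem_Icc]
  omega

theorem layerCard_eq_zero_iff {r m : ℕ} {cl : Fin m → Fin r → ℤ} {ν : Fin r} {c : ℤ} :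
    layerCard cl ν c = 0 ↔ ∀ i, cl i ν ≠ c := by
  simp [layerCard, filter_eq_empty_iff]

theorem sum_layerCard_mul {r m : ℕ} (cl : Fin m → Fin r → ℤ) (ν : Fin r) (S : Finset ℤ)
    (w : ℤ → ℤ) :
    ∑ c ∈ S, (layerCard cl ν c : ℤ) * w c = ∑ i, if cl i ν ∈ S then w (cl i ν) else 0 := by
  rw [← sum_filter, ← sum_fiberwise_of_maps_to (t := S) (g := fun i => cl i ν) (by simp)]
  refine sum_congr rfl fun c hc => ?_
  have hfiber : ((univ.filter fun i => cl i ν ∈ S).filter fun i => cl i ν = c) =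
      univ.filter fun i => cl i ν = c := by
    rw [filter_filter]
    exact filter_congr fun i _ => ⟨And.right, fun hi => ⟨hi ▸ hc, hi⟩⟩
  rw [hfiber, sum_congr rfl fun i hi => congrArg w (mem_filter.mp hi).2, sum_const, nsmul_eq_mul,
    layerCard]

theorem stmt_11_general {r : ℕ} (cl : Fin (2 ^ r) → (Fin r → ℤ)) (h : IsExceptional cl)
    (ν : Fin r) (lo hi : ℤ)
    (hlo : layerCard cl ν (lo - 1) = 0) (hhi : layerCard cl ν (hi + 1) = 0) :
    (∑ c ∈ Finset.Icc lo hi,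
      (if Even c then (layerCard cl ν c : ℤ) else -(layerCard cl ν c : ℤ))) = 0 := by
  have hlo' := layerCard_eq_zero_iff.mp hlo
  have hhi' := layerCard_eq_zero_iff.mp hhi
  have hstep_parity : ∀ i j, cl j ν - cl i ν = 1 → ¬(Even (cl i ν) ↔ Even (cl j ν)) := by
    intro i j hij
    rw [iff_comm, ← Int.even_sub, hij]
    decide
  have hparity := h.sum_ite_one_neg_one_eq_zero ν (fun i => Even (cl i ν)) hstep_parity
  -- Since no layer borders the segment, a unit step never enters or leaves it, so flipping the
  -- parity outside the segment again gives an admissible colouring.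
  have htwisted := h.sum_ite_one_neg_one_eq_zero ν (fun i => Even (cl i ν) ↔ cl i ν ∈ Icc lo hi)
    fun i j hij => by
      have := hstep_parity i j hij
      rw [mem_Icc_iff_of_sub_eq_one hij (hlo' i) (hhi' j)]
      tauto
  have hsplit : ∀ i, 2 * (if cl i ν ∈ Icc lo hi then (if Even (cl i ν) then 1 else -1) else 0) =
      (if Even (cl i ν) then (1 : ℤ) else -1) +
        (if (Even (cl i ν) ↔ cl i ν ∈ Icc lo hi) then 1 else -1) := by
    intro i
    by_cases hin : cl i ν ∈ Icc lo hi <;> by_cases hev : Even (cl i ν) <;> simp [hin, hev]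
  have hsign : ∀ c, (if Even c then (layerCard cl ν c : ℤ) else -(layerCard cl ν c : ℤ)) =
      layerCard cl ν c * if Even c then 1 else -1 := by
    intro c
    split_ifs <;> ring
  simp only [hsign, sum_layerCard_mul]
  rw [← mul_right_inj' two_ne_zero, mul_sum, sum_congr rfl fun i _ => hsplit i, sum_add_distrib,
    hparity, htwisted]
  norm_num

theorem stmt_11 {r : ℕ} (cl : Fin (2 ^ r) → (Fin r → ℤ)) (h : IsExceptional cl)
    (ν : Fin r) (lo hi : ℤ) (hle : lo ≤ hi)
    (hseg : ∀ c : ℤ, lo ≤ c → c ≤ hi → layerCard cl ν c ≠ 0)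
    (hlo : layerCard cl ν (lo - 1) = 0) (hhi : layerCard cl ν (hi + 1) = 0) :
    (∑ c ∈ Finset.Icc lo hi,
      (if Even c then (layerCard cl ν c : ℤ) else -(layerCard cl ν c : ℤ))) = 0 :=
  stmt_11_general cl h ν lo hi hlo hhi
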